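/- arXiv:1506.05506 — 3 statements merged into one kernel-verified Lean document; each statement's English description precedes it below -/
import Mathlib

section
/- The residual sum of squares for the perturbed response satisfies ‖(I − X(X'X)^{-1}X')(y + ε)‖² = (1 + a(a+2)/(1+b))‖e‖². -/
/-!
The residual of `y + ε` is `e + ε`, because `ε` lies in the span of `e` and `u`, both orthogonal to
the columns of `X`. Writing `ε = c • w` with `c = a‖e‖/(1+b)` and `w = e/‖e‖ + √b u/‖u‖`, the
orthogonality of `e` and `u` gives `⟪e, w⟫ = ‖e‖` and `‖w‖² = 1 + b`, so
`‖e + ε‖² = ‖e‖² + 2c‖e‖ + c²(1+b)`, which simplifies to the claim.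
-/

open Matrix BigOperators

open scoped InnerProductSpace

/-- Euclidean norm of a vector in ℝⁿ. -/
noncomputable def nrm {n : ℕ} (v : Fin n → ℝ) : ℝ := Real.sqrt (v ⬝ᵥ v)

theorem nrm_eq_norm_toLp {n : ℕ} (v : Fin n → ℝ) :
    nrm v = ‖WithLp.toLp 2 v‖ := by
  rw [norm_eq_sqrt_real_inner, EuclideanSpace.inner_toLp_toLp, star_trivial, nrm]

section Residual

variable {m k R : Type*} [Fintype m] [Fintype k] [DecidableEq k] [CommRing R]

noncomputable def olsResidual (X : Matrix m k R) (y : m → R) : m → R :=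
  y - X *ᵥ ((Xᵀ * X)⁻¹ *ᵥ (Xᵀ *ᵥ y))

theorem olsResidual_add (X : Matrix m k R) (y z : m → R) :
    olsResidual X (y + z) = olsResidual X y + olsResidual X z := by
  simp only [olsResidual, mulVec_add]
  abel

theorem transpose_mulVec_olsResidual (X : Matrix m k R) (hX : IsUnit (Xᵀ * X).det) (y : m → R) :
    Xᵀ *ᵥ olsResidual X y = 0 := by
  rw [olsResidual, mulVec_sub, mulVec_mulVec, mulVec_mulVec, mul_nonsing_inv _ hX, one_mulVec,
    sub_self]

theorem olsResidual_eq_self_of_transpose_mulVec_eq_zero (X : Matrix m k R) {v : m → R}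
    (hv : Xᵀ *ᵥ v = 0) : olsResidual X v = v := by
  rw [olsResidual, hv, mulVec_zero, mulVec_zero, sub_zero]

end Residual

section InnerProductSpace

variable {E : Type*} [NormedAddCommGroup E] [InnerProductSpace ℝ E]

theorem norm_sq_normalize_add_smul_normalize {e u : E} (he : e ≠ 0) (hu : u ≠ 0)
    (heu : ⟪e, u⟫_ℝ = 0) (t : ℝ) :
    ‖‖e‖⁻¹ • e + t • (‖u‖⁻¹ • u)‖ ^ 2 = 1 + t ^ 2 := by
  have hne : ‖e‖ ≠ 0 := norm_ne_zero_iff.mpr he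
  have hnu : ‖u‖ ≠ 0 := norm_ne_zero_iff.mpr hu
  rw [norm_add_sq_real, real_inner_smul_left, real_inner_smul_right, real_inner_smul_right, heu]
  simp only [norm_smul, norm_inv, Real.norm_eq_abs, abs_norm, mul_pow, sq_abs]
  field_simp
  ring

theorem norm_add_smul_normalize_sq {e u : E} (he : e ≠ 0) (hu : u ≠ 0) (heu : ⟪e, u⟫_ℝ = 0)
    (a : ℝ) {b : ℝ} (hb : 0 ≤ b) :
    ‖e + (a * ‖e‖ / (1 + b)) • (‖e‖⁻¹ • e + Real.sqrt b • (‖u‖⁻¹ • u))‖ ^ 2 =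
      (1 + a * (a + 2) / (1 + b)) * ‖e‖ ^ 2 := by
  have hne : ‖e‖ ≠ 0 := norm_ne_zero_iff.mpr he
  have hb1 : 1 + b ≠ 0 := by positivity
  have hew : ⟪e, ‖e‖⁻¹ • e + Real.sqrt b • (‖u‖⁻¹ • u)⟫_ℝ = ‖e‖ := by
    rw [inner_add_right, real_inner_smul_right, real_inner_self_eq_norm_sq, real_inner_smul_right,
      real_inner_smul_right, heu]
    field_simp
    ring
  rw [norm_add_sq_real, real_inner_smul_right, hew, norm_smul, mul_pow,
    norm_sq_normalize_add_smul_normalize he hu heu, Real.sq_sqrt hb, Real.norm_eq_abs, sq_abs]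
  field_simp
  ring

end InnerProductSpace

theorem residual_sum_of_squares_perturbed_general {n p : ℕ}
    (X : Matrix (Fin n) (Fin (p + 1)) ℝ)
    (hX : IsUnit (Xᵀ * X).det)
    (y e : Fin n → ℝ)
    (he : e = y - X.mulVec ((Xᵀ * X)⁻¹.mulVec (Xᵀ.mulVec y)))
    (he0 : e ≠ 0) (u : Fin n → ℝ) (hu0 : u ≠ 0)
    (hXu : Xᵀ.mulVec u = 0) (heu : e ⬝ᵥ u = 0)
    (a b : ℝ) (hb : 0 ≤ b)
    (ε : Fin n → ℝ)
    (hε : ε = (a * nrm e / (1 + b)) •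
        ((nrm e)⁻¹ • e + Real.sqrt b • ((nrm u)⁻¹ • u))) :
    (nrm ((y + ε) - X.mulVec ((Xᵀ * X)⁻¹.mulVec (Xᵀ.mulVec (y + ε))))) ^ 2 =
      (1 + a * (a + 2) / (1 + b)) * (nrm e) ^ 2 := by
  change e = olsResidual X y at he
  have hXe : Xᵀ *ᵥ e = 0 := he ▸ transpose_mulVec_olsResidual X hX y
  have hXε : Xᵀ *ᵥ ε = 0 := by simp [hε, mulVec_add, mulVec_smul, hXe, hXu]
  change nrm (olsResidual X (y + ε)) ^ 2 = _
  rw [olsResidual_add, ← he, olsResidual_eq_self_of_transpose_mulVec_eq_zero X hXε, hε]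
  simp only [nrm_eq_norm_toLp, WithLp.toLp_add, WithLp.toLp_smul]
  refine norm_add_smul_normalize_sq (by simpa using he0) (by simpa using hu0) ?_ a hb
  rwa [EuclideanSpace.inner_toLp_toLp, star_trivial, dotProduct_comm]

/-- ‖(I − X(X'X)⁻¹X')(y + ε)‖² = (1 + a(a+2)/(1+b))‖e‖². -/
theorem residual_sum_of_squares_perturbed {n p : ℕ}
    (X : Matrix (Fin n) (Fin (p + 1)) ℝ)
    (hX : IsUnit (Xᵀ * X).det)
    (y e : Fin n → ℝ)
    (he : e = y - X.mulVec ((Xᵀ * X)⁻¹.mulVec (Xᵀ.mulVec y)))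
    (he0 : e ≠ 0) (u : Fin n → ℝ) (hu0 : u ≠ 0)
    (hXu : Xᵀ.mulVec u = 0) (heu : e ⬝ᵥ u = 0)
    (a b : ℝ) (ha : a ≠ 0) (hb : 0 ≤ b)
    (ε : Fin n → ℝ)
    (hε : ε = (a * nrm e / (1 + b)) •
        ((nrm e)⁻¹ • e + Real.sqrt b • ((nrm u)⁻¹ • u))) :
    (nrm ((y + ε) - X.mulVec ((Xᵀ * X)⁻¹.mulVec (Xᵀ.mulVec (y + ε))))) ^ 2 =
      (1 + a * (a + 2) / (1 + b)) * (nrm e) ^ 2 :=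
  residual_sum_of_squares_perturbed_general X hX y e he he0 u hu0 hXu heu a b hb ε hε
end

section
/- The inner product (y − ȳ1_n)'(y + ε − ȳ1_n) equals ‖y − ȳ1_n‖²(1 + (a/(1+b))(1 − R²)). -/
open Matrix BigOperators

/-!
Writing `d = y - ȳ1`, the fitted decomposition `y = e + Xβ̂` and the fact that `1` is a column
of `X` give `d = e + Xγ` for some `γ`. Since `e` and `u` are orthogonal to the column space of
`X` (the normal equations, resp. `X'u = 0`), `d'e = e'e` and `d'u = e'u = 0`, so only the `e`
component of `ε` contributes: `d'ε = a‖e‖²/(1+b)`. Finally `‖e‖² = ‖d‖²(1 - R²)`.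
-/

lemma nrm_sq {n : ℕ} (v : Fin n → ℝ) : nrm v ^ 2 = v ⬝ᵥ v :=
  Real.sq_sqrt (Finset.sum_nonneg fun i _ => mul_self_nonneg (v i))

theorem Matrix.transpose_mulVec_sub_mulVec_nonsing_inv_eq_zero {m k R : Type*} [Fintype m]
    [Fintype k] [DecidableEq k] [CommRing R] (X : Matrix m k R)
    (hX : IsUnit (Xᵀ * X).det) (y : m → R) :
    Xᵀ *ᵥ (y - X *ᵥ ((Xᵀ * X)⁻¹ *ᵥ (Xᵀ *ᵥ y))) = 0 := by
  rw [mulVec_sub, mulVec_mulVec, mulVec_mulVec, mul_nonsing_inv _ hX, one_mulVec, sub_self]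

theorem Matrix.add_mulVec_dotProduct_of_transpose_mulVec_eq_zero {m k R : Type*} [Fintype m]
    [Fintype k] [CommSemiring R] (X : Matrix m k R)
    (e : m → R) (γ : k → R) {v : m → R} (hv : Xᵀ *ᵥ v = 0) :
    (e + X *ᵥ γ) ⬝ᵥ v = e ⬝ᵥ v := by
  rw [add_dotProduct, dotProduct_comm (X *ᵥ γ), dotProduct_mulVec, ← mulVec_transpose, hv,
    zero_dotProduct, add_zero]

theorem Matrix.const_eq_mulVec_single_of_col_eq_one {m k R : Type*} [Fintype k]
    [DecidableEq k] [NonAssocSemiring R] (X : Matrix m k R) {j : k}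
    (hj : ∀ i, X i j = 1) (c : R) : (fun _ => c) = X *ᵥ Pi.single j c := by
  ext i
  simp [mulVec_single, hj]

lemma dotProduct_smul_inv_nrm_smul_add {n : ℕ} (d e v : Fin n → ℝ) (c : ℝ)
    (hde : d ⬝ᵥ e = e ⬝ᵥ e) (hdv : d ⬝ᵥ v = 0) :
    d ⬝ᵥ (c • ((nrm e)⁻¹ • e + v)) = c * nrm e := by
  rw [dotProduct_smul, dotProduct_add, dotProduct_smul, hde, hdv, ← nrm_sq, smul_eq_mul,
    smul_eq_mul, add_zero]
  rcases eq_or_ne (nrm e) 0 with h | h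
  · simp [h]
  · field_simp

lemma nrm_sq_mul_div_nrm_sq {n : ℕ} {d e : Fin n → ℝ} (hde : d ⬝ᵥ e = e ⬝ᵥ e) :
    nrm d ^ 2 * (nrm e ^ 2 / nrm d ^ 2) = nrm e ^ 2 := by
  rcases eq_or_ne d 0 with rfl | hd
  · rw [nrm_sq e, ← hde, zero_dotProduct]
    simp
  · have : nrm d ^ 2 ≠ 0 := by
      rw [nrm_sq]
      exact fun h => hd (dotProduct_self_eq_zero.mp h)
    exact mul_div_cancel₀ _ this

theorem inner_product_perturbed_general {n p : ℕ} (X : Matrix (Fin n) (Fin (p + 1)) ℝ)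
    (hX : IsUnit (Xᵀ * X).det)
    (hone : ∃ j, ∀ i, X i j = 1)
    (y e : Fin n → ℝ)
    (he : e = y - X.mulVec ((Xᵀ * X)⁻¹.mulVec (Xᵀ.mulVec y)))
    (ybar : ℝ)
    (R2 : ℝ) (hR2 : R2 = 1 - (nrm e) ^ 2 / (nrm (y - fun _ => ybar)) ^ 2)
    (u : Fin n → ℝ)
    (hXu : Xᵀ.mulVec u = 0) (heu : e ⬝ᵥ u = 0)
    (a b : ℝ)
    (ε : Fin n → ℝ)
    (hε : ε = (a * nrm e / (1 + b)) •
        ((nrm e)⁻¹ • e + Real.sqrt b • ((nrm u)⁻¹ • u))) :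
    (y - fun _ => ybar) ⬝ᵥ (y + ε - fun _ => ybar) =
      (nrm (y - fun _ => ybar)) ^ 2 * (1 + (a / (1 + b)) * (1 - R2)) := by
  obtain ⟨j, hj⟩ := hone
  set d : Fin n → ℝ := y - fun _ => ybar
  have hXe : Xᵀ *ᵥ e = 0 := he ▸ X.transpose_mulVec_sub_mulVec_nonsing_inv_eq_zero hX y
  have hd : d = e + X *ᵥ ((Xᵀ * X)⁻¹ *ᵥ (Xᵀ *ᵥ y) - Pi.single j ybar) := by
    rw [mulVec_sub, ← X.const_eq_mulVec_single_of_col_eq_one hj, he]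
    simp only [d]
    abel
  have hde : d ⬝ᵥ e = e ⬝ᵥ e := hd ▸ X.add_mulVec_dotProduct_of_transpose_mulVec_eq_zero _ _ hXe
  have hdu : d ⬝ᵥ u = 0 := by
    rw [hd, X.add_mulVec_dotProduct_of_transpose_mulVec_eq_zero _ _ hXu, heu]
  have hdε : d ⬝ᵥ ε = a * nrm e ^ 2 / (1 + b) := by
    rw [hε, dotProduct_smul_inv_nrm_smul_add d e _ _ hde (by simp [hdu])]
    ring
  have hsplit : y + ε - (fun _ => ybar) = d + ε := by
    simp only [d]
    abel
  rw [hsplit, dotProduct_add, hdε, ← nrm_sq, hR2, sub_sub_cancel, mul_add, mul_one,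
    mul_left_comm, nrm_sq_mul_div_nrm_sq hde]
  ring

/-- (y − ȳ1)'(y + ε − ȳ1) = ‖y − ȳ1‖²(1 + (a/(1+b))(1 − R²)). -/
theorem inner_product_perturbed {n p : ℕ} (X : Matrix (Fin n) (Fin (p + 1)) ℝ)
    (hX : IsUnit (Xᵀ * X).det)
    (hone : ∃ j, ∀ i, X i j = 1)
    (y e : Fin n → ℝ)
    (he : e = y - X.mulVec ((Xᵀ * X)⁻¹.mulVec (Xᵀ.mulVec y)))
    (he0 : e ≠ 0)
    (ybar : ℝ) (hybar : ybar = (∑ i, y i) / (n : ℝ))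
    (hy : y ≠ fun _ => ybar)
    (R2 : ℝ) (hR2 : R2 = 1 - (nrm e) ^ 2 / (nrm (y - fun _ => ybar)) ^ 2)
    (u : Fin n → ℝ) (hu0 : u ≠ 0)
    (hXu : Xᵀ.mulVec u = 0) (heu : e ⬝ᵥ u = 0)
    (a b : ℝ) (ha : a ≠ 0) (hb : 0 ≤ b)
    (ε : Fin n → ℝ)
    (hε : ε = (a * nrm e / (1 + b)) •
        ((nrm e)⁻¹ • e + Real.sqrt b • ((nrm u)⁻¹ • u))) :
    (y - fun _ => ybar) ⬝ᵥ (y + ε - fun _ => ybar) =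
      (nrm (y - fun _ => ybar)) ^ 2 * (1 + (a / (1 + b)) * (1 - R2)) :=
  inner_product_perturbed_general X hX hone y e he ybar R2 hR2 u hXu heu a b ε hε
end

section
/- The correlation coefficient between y and y+ε equals (1 + b + a(1−R²)) / ((1+b)^{1/2}(1 + b + a(a+2)(1−R²))^{1/2}). -/
/-!
Let `d = y - ȳ1`. Since `X'e = X'u = 0` and `1` is a column of `X`, both `e` and `u` are
orthogonal to `1` and to the fitted values `y - e`, so `d·e = e·e` and `d·u = 0`. Writing
`ε = a/(1+b) (e + k u)` with `‖k u‖² = b‖e‖²` then gives `d·ε = a‖e‖²/(1+b)` and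
`‖ε‖² = a²‖e‖²/(1+b)`, and `‖e‖² = (1 - R²)‖d‖²` turns the correlation into the stated ratio.
-/

open Matrix BigOperators

lemma dotProduct_self_nonneg {ι R : Type*} [Fintype ι] [Ring R] [LinearOrder R]
    [IsStrictOrderedRing R] (v : ι → R) : 0 ≤ v ⬝ᵥ v :=
  Fintype.sum_nonneg fun i => mul_self_nonneg (v i)

lemma dotProduct_add_smul_self {ι R : Type*} [Fintype ι] [CommRing R] {e u : ι → R}
    (heu : e ⬝ᵥ u = 0) (k : R) :
    (e + k • u) ⬝ᵥ (e + k • u) = e ⬝ᵥ e + k ^ 2 * (u ⬝ᵥ u) := by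
  simp only [add_dotProduct, dotProduct_add, smul_dotProduct, dotProduct_smul, smul_eq_mul,
    heu, dotProduct_comm u e]
  ring

lemma dotProduct_smul_add_smul_of_dotProduct_eq_zero {ι R : Type*} [Fintype ι] [CommRing R]
    {d u : ι → R} (hdu : d ⬝ᵥ u = 0) (c k : R) (e : ι → R) :
    d ⬝ᵥ (c • (e + k • u)) = c * (d ⬝ᵥ e) := by
  rw [dotProduct_smul, dotProduct_add, dotProduct_smul, hdu, smul_zero, add_zero, smul_eq_mul]

section Nrm

variable {n : ℕ}

lemma nrm_mul_self (v : Fin n → ℝ) : nrm v * nrm v = v ⬝ᵥ v :=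
  Real.mul_self_sqrt (dotProduct_self_nonneg v)

lemma nrm_eq_zero_iff {v : Fin n → ℝ} : nrm v = 0 ↔ v = 0 :=
  (Real.sqrt_eq_zero (dotProduct_self_nonneg v)).trans
    dotProduct_self_eq_zero

lemma nrm_smul_inv_nrm_smul (v : Fin n → ℝ) : nrm v • (nrm v)⁻¹ • v = v := by
  by_cases hv : v = 0
  · simp [hv]
  · rw [smul_smul, mul_inv_cancel₀ (nrm_eq_zero_iff.not.mpr hv), one_smul]

lemma dotProduct_div_nrm_mul_nrm {d w : Fin n → ℝ} {A Q c : ℝ} (hd : d ≠ 0) (hc : 0 < c)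
    (hdw : d ⬝ᵥ w = (d ⬝ᵥ d) * A / c) (hww : w ⬝ᵥ w = (d ⬝ᵥ d) * Q / c) :
    d ⬝ᵥ w / (nrm d * nrm w) = A / (√c * √Q) := by
  have hnd : nrm d ≠ 0 := nrm_eq_zero_iff.not.mpr hd
  have hnw : nrm w = nrm d * √Q / √c := by
    rw [nrm, hww, Real.sqrt_div' _ hc.le, Real.sqrt_mul (dotProduct_self_nonneg d), nrm]
  have hsc : √c * √c = c := Real.mul_self_sqrt hc.le
  have hsc0 : √c ≠ 0 := (Real.sqrt_pos.mpr hc).ne'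
  rw [hnw, hdw, ← nrm_mul_self]
  by_cases hQ : √Q = 0
  · simp [hQ]
  · field_simp
    rw [sq, hsc]

lemma perturbation_eq (a b : ℝ) (e u : Fin n → ℝ) :
    (a * nrm e / (1 + b)) • ((nrm e)⁻¹ • e + √b • ((nrm u)⁻¹ • u)) =
      (a / (1 + b)) • (e + (√b * nrm e / nrm u) • u) := by
  rw [smul_add, smul_add, mul_div_right_comm, mul_smul, nrm_smul_inv_nrm_smul]
  simp only [smul_smul]
  congr 2
  ring

lemma perturbation_dotProduct_self {a b : ℝ} {e u : Fin n → ℝ} (hb : 0 ≤ b) (hu : u ≠ 0)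
    (heu : e ⬝ᵥ u = 0) :
    ((a / (1 + b)) • (e + (√b * nrm e / nrm u) • u)) ⬝ᵥ
      ((a / (1 + b)) • (e + (√b * nrm e / nrm u) • u)) = a ^ 2 / (1 + b) * (e ⬝ᵥ e) := by
  have hnu : nrm u ≠ 0 := nrm_eq_zero_iff.not.mpr hu
  have h1b : 1 + b ≠ 0 := by positivity
  rw [smul_dotProduct, dotProduct_smul, dotProduct_add_smul_self heu, div_pow, mul_pow,
    Real.sq_sqrt hb, ← nrm_mul_self, ← nrm_mul_self u, smul_eq_mul, smul_eq_mul]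
  field_simp

end Nrm

section LeastSquares

variable {m k R : Type*} [Fintype k] [CommRing R] (X : Matrix m k R)

lemma transpose_mulVec_residual [Fintype m] [DecidableEq k] (hX : IsUnit (Xᵀ * X).det)
    (y : m → R) :
    Xᵀ *ᵥ (y - X *ᵥ ((Xᵀ * X)⁻¹ *ᵥ (Xᵀ *ᵥ y))) = 0 := by
  rw [mulVec_sub, mulVec_mulVec, mulVec_mulVec, mul_nonsing_inv _ hX, one_mulVec, sub_self]

lemma dotProduct_sub_mulVec_of_transpose_mulVec_eq_zero [Fintype m] {v : m → R}
    (hv : Xᵀ *ᵥ v = 0) (y : m → R) (w : k → R) : v ⬝ᵥ (y - X *ᵥ w) = v ⬝ᵥ y := by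
  rw [dotProduct_sub, dotProduct_mulVec, ← mulVec_transpose, hv, zero_dotProduct, sub_zero]

lemma mulVec_single_of_col_eq_one [DecidableEq k] {j : k} (hj : ∀ i, X i j = 1) (c : R) :
    X *ᵥ Pi.single j c = fun _ => c := by
  ext i
  simp [hj]

lemma dotProduct_sub_const_of_transpose_mulVec_eq_zero [Fintype m] [DecidableEq k] {j : k}
    (hj : ∀ i, X i j = 1) {v : m → R} (hv : Xᵀ *ᵥ v = 0) (y : m → R) (c : R) :
    v ⬝ᵥ (y - fun _ => c) = v ⬝ᵥ y := by
  rw [← mulVec_single_of_col_eq_one X hj c,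
    dotProduct_sub_mulVec_of_transpose_mulVec_eq_zero X hv]

end LeastSquares

theorem correlation_perturbed_general {n p : ℕ} (X : Matrix (Fin n) (Fin (p + 1)) ℝ)
    (hX : IsUnit (Xᵀ * X).det)
    (hone : ∃ j, ∀ i, X i j = 1)
    (y e : Fin n → ℝ)
    (he : e = y - X.mulVec ((Xᵀ * X)⁻¹.mulVec (Xᵀ.mulVec y)))
    (ybar : ℝ)
    (hy : y ≠ fun _ => ybar)
    (R2 : ℝ) (hR2 : R2 = 1 - (nrm e) ^ 2 / (nrm (y - fun _ => ybar)) ^ 2)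
    (u : Fin n → ℝ) (hu0 : u ≠ 0)
    (hXu : Xᵀ.mulVec u = 0) (heu : e ⬝ᵥ u = 0)
    (a b : ℝ) (hb : 0 ≤ b)
    (ε : Fin n → ℝ)
    (hε : ε = (a * nrm e / (1 + b)) •
        ((nrm e)⁻¹ • e + Real.sqrt b • ((nrm u)⁻¹ • u)))
    (r : ℝ)
    (hr : r = (y - fun _ => ybar) ⬝ᵥ (y + ε - fun _ => ybar) /
        (nrm (y - fun _ => ybar) * nrm (y + ε - fun _ => ybar))) :
    r = (1 + b + a * (1 - R2)) /
      (Real.sqrt (1 + b) * Real.sqrt (1 + b + a * (a + 2) * (1 - R2))) := by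
  obtain ⟨j, hj⟩ := hone
  set d := y - fun _ => ybar
  have hd : d ≠ 0 := sub_ne_zero.mpr hy
  have h1b : 0 < 1 + b := by positivity
  have centered_eq_residual : ∀ v, Xᵀ *ᵥ v = 0 → v ⬝ᵥ d = v ⬝ᵥ e := fun v hv => by
    rw [dotProduct_sub_const_of_transpose_mulVec_eq_zero X hj hv, he,
      dotProduct_sub_mulVec_of_transpose_mulVec_eq_zero X hv]
  have hde : d ⬝ᵥ e = e ⬝ᵥ e := by
    rw [dotProduct_comm, centered_eq_residual e (he ▸ transpose_mulVec_residual X hX y)]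
  have hdu : d ⬝ᵥ u = 0 := by
    rw [dotProduct_comm, centered_eq_residual u hXu, dotProduct_comm, heu]
  have hee : e ⬝ᵥ e = (1 - R2) * (d ⬝ᵥ d) := by
    rw [hR2, sub_sub_cancel, sq, sq, nrm_mul_self, nrm_mul_self,
      div_mul_cancel₀ _ (dotProduct_self_eq_zero.not.mpr hd)]
  rw [perturbation_eq] at hε
  have hdε : d ⬝ᵥ ε = a / (1 + b) * (e ⬝ᵥ e) := by
    rw [hε, dotProduct_smul_add_smul_of_dotProduct_eq_zero hdu, hde]
  have hεε : ε ⬝ᵥ ε = a ^ 2 / (1 + b) * (e ⬝ᵥ e) :=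
    hε ▸ perturbation_dotProduct_self hb hu0 heu
  rw [hr, add_sub_right_comm]
  apply dotProduct_div_nrm_mul_nrm hd h1b
  · rw [dotProduct_add, hdε, hee]
    field_simp
    ring
  · rw [add_dotProduct, dotProduct_add, dotProduct_add, dotProduct_comm ε d, hdε, hεε, hee]
    field_simp
    ring

/-- The correlation coefficient between y and y+ε equals
(1 + b + a(1−R²)) / ((1+b)^{1/2}(1 + b + a(a+2)(1−R²))^{1/2}). -/
theorem correlation_perturbed {n p : ℕ} (X : Matrix (Fin n) (Fin (p + 1)) ℝ)
    (hX : IsUnit (Xᵀ * X).det)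
    (hone : ∃ j, ∀ i, X i j = 1)
    (y e : Fin n → ℝ)
    (he : e = y - X.mulVec ((Xᵀ * X)⁻¹.mulVec (Xᵀ.mulVec y)))
    (he0 : e ≠ 0)
    (ybar : ℝ) (hybar : ybar = (∑ i, y i) / (n : ℝ))
    (hy : y ≠ fun _ => ybar)
    (R2 : ℝ) (hR2 : R2 = 1 - (nrm e) ^ 2 / (nrm (y - fun _ => ybar)) ^ 2)
    (u : Fin n → ℝ) (hu0 : u ≠ 0)
    (hXu : Xᵀ.mulVec u = 0) (heu : e ⬝ᵥ u = 0)
    (a b : ℝ) (ha : a ≠ 0) (hb : 0 ≤ b)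
    (hpos : 0 < 1 + b + a * (a + 2) * (1 - R2))
    (ε : Fin n → ℝ)
    (hε : ε = (a * nrm e / (1 + b)) •
        ((nrm e)⁻¹ • e + Real.sqrt b • ((nrm u)⁻¹ • u)))
    (r : ℝ)
    (hr : r = (y - fun _ => ybar) ⬝ᵥ (y + ε - fun _ => ybar) /
        (nrm (y - fun _ => ybar) * nrm (y + ε - fun _ => ybar))) :
    r = (1 + b + a * (1 - R2)) /
      (Real.sqrt (1 + b) * Real.sqrt (1 + b + a * (a + 2) * (1 - R2))) :=
  correlation_perturbed_general X hX hone y e he ybar hy R2 hR2 u hu0 hXu heu a b hb ε hε r hr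
end
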